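/- arXiv:1409.0221 — 10 statements merged into one kernel-verified Lean document; each statement's English description precedes it below -/
import Mathlib

section
/- Let g = aff(ℝ) be the 2-dimensional real Lie algebra with basis e₁, e₂ and bracket [e₁,e₂] = e₂, and let α,β,γ,δ,ε,λ ∈ ℝ. Define the bilinear product on g by e₁·e₁ = αe₁+βe₂, e₁·e₂ = γe₁+(δ+1)e₂, e₂·e₁ = γe₁+δe₂, e₂·e₂ = εe₁+λe₂ (this product always satisfies x·y − y·x = [x,y]). Then this product is left-symmetric, i.e. (x·y)·z − x·(y·z) = (y·x)·z − y·(x·z) for all x,y,z ∈ g, if and only if the four equations hold: βε−γδ+γ = 0, αδ−βγ+βλ−δ² = 0, αε−γ²+γλ−δε−2ε = 0, and βε−γδ−λ = 0. -/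
/-- On `aff(ℝ)` (basis `e₁ = (1,0)`, `e₂ = (0,1)`, bracket `[e₁,e₂] = e₂`), the bilinear
product with `e₁·e₁ = αe₁+βe₂`, `e₁·e₂ = γe₁+(δ+1)e₂`, `e₂·e₁ = γe₁+δe₂`,
`e₂·e₂ = εe₁+λe₂` always satisfies `x·y − y·x = [x,y]`, and it is left-symmetric iff
`βε−γδ+γ = 0`, `αδ−βγ+βλ−δ² = 0`, `αε−γ²+γλ−δε−2ε = 0` and `βε−γδ−λ = 0`. -/
theorem stmt5 (α β γ δ ε lam : ℝ)
    (mul : ℝ × ℝ → ℝ × ℝ → ℝ × ℝ)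
    (hmul : ∀ x y, mul x y =
      (α * (x.1 * y.1) + γ * (x.1 * y.2) + γ * (x.2 * y.1) + ε * (x.2 * y.2),
       β * (x.1 * y.1) + (δ + 1) * (x.1 * y.2) + δ * (x.2 * y.1) + lam * (x.2 * y.2))) :
    (∀ x y, mul x y - mul y x = (0, x.1 * y.2 - x.2 * y.1)) ∧
    ((∀ x y z, mul (mul x y) z - mul x (mul y z) = mul (mul y x) z - mul y (mul x z)) ↔
      (β * ε - γ * δ + γ = 0 ∧ α * δ - β * γ + β * lam - δ ^ 2 = 0 ∧
       α * ε - γ ^ 2 + γ * lam - δ * ε - 2 * ε = 0 ∧ β * ε - γ * δ - lam = 0)) := by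
  constructor
  · intro x y
    simp only [hmul, Prod.mk_sub_mk, Prod.mk.injEq]
    constructor <;> ring
  constructor
  · intro h
    have h1 := h (1, 0) (0, 1) (1, 0)
    have h2 := h (1, 0) (0, 1) (0, 1)
    simp only [hmul, Prod.mk_sub_mk, Prod.mk.injEq] at h1 h2
    obtain ⟨h1a, h1b⟩ := h1
    obtain ⟨h2a, h2b⟩ := h2
    refine ⟨by nlinarith [h1a], by nlinarith [h1b], by nlinarith [h2a], by nlinarith [h2b]⟩
  · rintro ⟨h1, h2, h3, h4⟩ x y z
    simp only [hmul, Prod.mk_sub_mk, Prod.mk.injEq]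
    constructor
    · linear_combination (x.1 * y.2 - x.2 * y.1) * z.1 * h1 -
        (x.1 * y.2 - x.2 * y.1) * z.2 * h3
    · linear_combination (x.1 * y.2 - x.2 * y.1) * z.1 * h2 -
        (x.1 * y.2 - x.2 * y.1) * z.2 * h4
end

section
/- A tuple (α,β,γ,δ,ε,λ) ∈ ℝ⁶ satisfies the system βε−γδ+γ = 0, αδ−βγ+βλ−δ² = 0, αε−γ²+γλ−δε−2ε = 0, βε−γδ−λ = 0 if and only if one of the following holds: (1) γ = δ = ε = λ = 0 (with α, β arbitrary); (2) γ = ε = λ = 0 and δ = α (with β arbitrary); or (3) ε ≠ 0, α = 2 + γ²/ε, β = −(γ³+γε)/ε², δ = −γ²/ε and λ = −γ. Hence the variety of left-symmetric products compatible with the bracket on aff(ℝ) is the union of these three two-dimensional components. -/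
/-- A tuple `(α,β,γ,δ,ε,λ) ∈ ℝ⁶` satisfies the system of equations describing
left-symmetric products compatible with the bracket on `aff(ℝ)` iff it lies in one of
three two-dimensional components. -/
theorem stmt6 (α β γ δ ε lam : ℝ) :
    (β * ε - γ * δ + γ = 0 ∧ α * δ - β * γ + β * lam - δ ^ 2 = 0 ∧
     α * ε - γ ^ 2 + γ * lam - δ * ε - 2 * ε = 0 ∧ β * ε - γ * δ - lam = 0) ↔
    ((γ = 0 ∧ δ = 0 ∧ ε = 0 ∧ lam = 0) ∨
     (γ = 0 ∧ ε = 0 ∧ lam = 0 ∧ δ = α) ∨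
     (ε ≠ 0 ∧ α = 2 + γ ^ 2 / ε ∧ β = -(γ ^ 3 + γ * ε) / ε ^ 2 ∧
      δ = -γ ^ 2 / ε ∧ lam = -γ)) := by
  constructor
  · rintro ⟨h1, h2, h3, h4⟩
    have hlam : lam = -γ := by linarith
    by_cases hε : ε = 0
    · subst hε
      have hγ : γ = 0 := by nlinarith [h3, hlam, sq_nonneg γ]
      have hlam0 : lam = 0 := by rw [hlam, hγ]; ring
      have hδ : δ * (α - δ) = 0 := by
        have := h2
        rw [hγ] at this
        linear_combination this - β * hlam0
      rcases mul_eq_zero.mp hδ with hd | hd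
      · exact Or.inl ⟨hγ, hd, rfl, hlam0⟩
      · exact Or.inr (Or.inl ⟨hγ, rfl, hlam0, by linarith⟩)
    · right; right
      have key : ε * (δ * ε + γ ^ 2) = 0 := by
        linear_combination (ε ^ 2 / 2) * h2 - (δ * ε / 2) * h3 +
          ((2 * γ - lam) * ε / 2) * h1 - (γ * ε / 2) * h4
      have hδε : δ * ε = -γ ^ 2 := by
        rcases mul_eq_zero.mp key with h | h
        · exact absurd h hε
        · linarith
      have hδ : δ = -γ ^ 2 / ε := by field_simp; linarith
      have hα : α = 2 + γ ^ 2 / ε := by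
        field_simp
        linear_combination h3 - γ * hlam + hδε
      have hβ : β = -(γ ^ 3 + γ * ε) / ε ^ 2 := by
        field_simp
        linear_combination ε * h1 + γ * hδε
      exact ⟨hε, hα, hβ, hδ, hlam⟩
  · rintro (⟨hγ, hδ, hε, hl⟩ | ⟨hγ, hε, hl, hδ⟩ | ⟨hε, hα, hβ, hδ, hl⟩)
    · subst hγ hδ hε hl; exact ⟨by ring, by ring, by ring, by ring⟩
    · subst hγ hε hl hδ; exact ⟨by ring, by ring, by ring, by ring⟩
    · subst hα hβ hδ hl
      refine ⟨?_, ?_, ?_, ?_⟩ <;> field_simp <;> ring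
end

section
/- For α ∈ ℝ, let 𝓕₁(α) denote ℝ² with basis e₁, e₂ and bilinear product e₁·e₁ = αe₁+αe₂, e₁·e₂ = e₂, e₂·e₁ = 0, e₂·e₂ = 0. If α ≠ α′ then there is no linear bijection f : ℝ² → ℝ² satisfying f(x·y) = f(x)·′f(y) for all x,y, where · is the product of 𝓕₁(α) and ·′ that of 𝓕₁(α′). In particular there exist infinitely many pairwise non-isomorphic left-symmetric products compatible with the bracket on aff(ℝ), hence infinitely many non-isomorphic flat left invariant affine structures on Aff(ℝ). -/
/-!
The first coordinate `x₁` is intrinsic to `𝓕₁(α)`: `e₂` spans the left annihilator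
`{x | x·y = 0 for all y}`, and `x·e₂ = x₁ e₂`. An isomorphism therefore sends `e₂` to a nonzero
multiple of `e₂` and preserves `x₁`. Comparing first coordinates of `e₁·e₁ = αe₁ + αe₂`
then gives `α = α′`.
-/

/-- The product of `𝓕₁(a)`, written in coordinates with respect to `e₁ = (1, 0)`, `e₂ = (0, 1)`. -/
def mulF₁ {R : Type*} [CommRing R] (a : R) (x y : R × R) : R × R :=
  (a * (x.1 * y.1), a * (x.1 * y.1) + x.1 * y.2)

section CommRing

variable {R : Type*} [CommRing R] (a : R)

theorem mulF₁_assoc_symm (x y z : R × R) :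
    mulF₁ a (mulF₁ a x y) z - mulF₁ a x (mulF₁ a y z) =
      mulF₁ a (mulF₁ a y x) z - mulF₁ a y (mulF₁ a x z) := by
  simp only [mulF₁, Prod.ext_iff, Prod.fst_sub, Prod.snd_sub]
  constructor <;> ring

theorem mulF₁_sub_mulF₁_swap (x y : R × R) :
    mulF₁ a x y - mulF₁ a y x = (0, x.1 * y.2 - x.2 * y.1) := by
  simp only [mulF₁, Prod.ext_iff, Prod.fst_sub, Prod.snd_sub]
  constructor <;> ring

theorem forall_mulF₁_eq_zero_iff (x : R × R) : (∀ y, mulF₁ a x y = 0) ↔ x.1 = 0 := by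
  refine ⟨fun h => ?_, fun h y => by simp [mulF₁, h]⟩
  simpa [mulF₁] using congrArg Prod.snd (h (0, 1))

theorem mulF₁_of_fst_eq_zero (x : R × R) {y : R × R} (hy : y.1 = 0) :
    mulF₁ a x y = x.1 • y := by
  ext <;> simp [mulF₁, hy]

theorem fst_mulF₁_self (x : R × R) : (mulF₁ a x x).1 = a * x.1 ^ 2 := by
  simp only [mulF₁]
  ring

end CommRing

section Isomorphism

variable {R : Type*} [CommRing R] [IsDomain R] {a b : R} (f : (R × R) ≃ₗ[R] (R × R))

theorem fst_map_eq_fst_of_map_mulF₁ (hf : ∀ x y, f (mulF₁ a x y) = mulF₁ b (f x) (f y))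
    (x : R × R) : (f x).1 = x.1 := by
  set v := f (0, 1)
  have hv : v.1 = 0 := by
    refine (forall_mulF₁_eq_zero_iff b v).1 fun z => ?_
    obtain ⟨w, rfl⟩ := f.surjective z
    rw [← hf, (forall_mulF₁_eq_zero_iff a _).2 rfl, map_zero]
  have hv0 : v ≠ 0 := (f.map_ne_zero_iff).2 (by simp)
  have key : (f x).1 • v = x.1 • v := by
    rw [← mulF₁_of_fst_eq_zero b _ hv, ← hf, mulF₁_of_fst_eq_zero a _ rfl, map_smul]
  exact smul_left_injective R hv0 key

theorem eq_of_map_mulF₁ (hf : ∀ x y, f (mulF₁ a x y) = mulF₁ b (f x) (f y)) : a = b := by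
  have hfst := fst_map_eq_fst_of_map_mulF₁ f hf
  simpa [fst_mulF₁_self, hfst] using congrArg Prod.fst (hf (1, 0) (1, 0))

end Isomorphism

/-- For `α ∈ ℝ`, `𝓕₁(α)` is `ℝ²` with product `e₁·e₁ = αe₁+αe₂`, `e₁·e₂ = e₂`,
`e₂·e₁ = 0`, `e₂·e₂ = 0`. Each `𝓕₁(α)` is left-symmetric and compatible with the bracket
`[e₁,e₂] = e₂`, and if `α ≠ α′` then `𝓕₁(α)` and `𝓕₁(α′)` are non-isomorphic algebras;
hence there are infinitely many non-isomorphic flat left invariant affine structures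
on `Aff(ℝ)`. -/
theorem stmt7 (α α' : ℝ) (h : α ≠ α')
    (mul mul' : ℝ × ℝ → ℝ × ℝ → ℝ × ℝ)
    (hmul : ∀ x y, mul x y = (α * (x.1 * y.1), α * (x.1 * y.1) + x.1 * y.2))
    (hmul' : ∀ x y, mul' x y = (α' * (x.1 * y.1), α' * (x.1 * y.1) + x.1 * y.2)) :
    (∀ x y z, mul (mul x y) z - mul x (mul y z) = mul (mul y x) z - mul y (mul x z)) ∧
    (∀ x y, mul x y - mul y x = (0, x.1 * y.2 - x.2 * y.1)) ∧
    ¬ ∃ f : (ℝ × ℝ) ≃ₗ[ℝ] (ℝ × ℝ), ∀ x y, f (mul x y) = mul' (f x) (f y) := by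
  obtain rfl : mul = mulF₁ α := funext₂ hmul
  obtain rfl : mul' = mulF₁ α' := funext₂ hmul'
  exact ⟨mulF₁_assoc_symm α, mulF₁_sub_mulF₁_swap α,
    fun ⟨f, hf⟩ => h (eq_of_map_mulF₁ f hf)⟩
end

section
/- Let 𝓡₁ denote ℝ² with basis e₁,e₂ and product e₁·e₁ = 2e₁, e₁·e₂ = e₂, e₂·e₁ = 0, e₂·e₂ = e₁, and let 𝓡₂ denote ℝ² with the same products except e₂·e₂ = −e₁. Then there is no ℝ-linear bijection f : ℝ² → ℝ² with f(x·y) = f(x)·′f(y) for all x,y (· the product of 𝓡₁, ·′ that of 𝓡₂); i.e. 𝓡₁ and 𝓡₂ are non-isomorphic real algebras. -/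
/-!
An isomorphism `f` would send the basis `e₁, e₂` of `𝓡₁` to a pair `u = f e₁`, `v = f e₂` of `𝓡₂`
satisfying the same multiplication table: `v·u = 0`, `u·v = v`, `v·v = u`, `u·u = 2u`.
In `𝓡₂` the first two force `v₁ = 0`, and then `v·v = u` gives `u = (-v₂², 0)`; now `u·u = 2u`
says `u₁² = u₁` with `u₁ ≤ 0`, so `u₁ = 0` and `v = 0`, contradicting injectivity.
-/

theorem eq_zero_of_mul_table (mul : ℝ × ℝ → ℝ × ℝ → ℝ × ℝ)
    (hmul : ∀ x y, mul x y = (2 * (x.1 * y.1) - x.2 * y.2, x.1 * y.2)) {u v : ℝ × ℝ}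
    (hvu : mul v u = 0) (huv : mul u v = v) (hvv : mul v v = u) (huu : mul u u = (2 : ℝ) • u) :
    v = 0 := by
  obtain ⟨a, b⟩ := u
  obtain ⟨c, d⟩ := v
  simp only [hmul, Prod.ext_iff, Prod.fst_zero, Prod.snd_zero, Prod.smul_mk, smul_eq_mul]
    at hvu huv hvv huu
  have hc : c = 0 := by linarith [hvu.1, huv.1]
  have hb : b = 0 := by rw [← hvv.2, hc, zero_mul]
  have ha : a = -d ^ 2 := by rw [← hvv.1, hc]; ring
  have hd : d = 0 := by
    subst hb ha
    nlinarith [huu.1, sq_nonneg d, sq_nonneg (d ^ 2)]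
  rw [hc, hd, Prod.zero_eq_mk]

/-- `𝓡₁` (product `e₁·e₁ = 2e₁`, `e₁·e₂ = e₂`, `e₂·e₁ = 0`, `e₂·e₂ = e₁`) and `𝓡₂`
(same, except `e₂·e₂ = −e₁`) are non-isomorphic real algebras. -/
theorem stmt8
    (mul₁ mul₂ : ℝ × ℝ → ℝ × ℝ → ℝ × ℝ)
    (hmul₁ : ∀ x y, mul₁ x y = (2 * (x.1 * y.1) + x.2 * y.2, x.1 * y.2))
    (hmul₂ : ∀ x y, mul₂ x y = (2 * (x.1 * y.1) - x.2 * y.2, x.1 * y.2)) :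
    ¬ ∃ f : (ℝ × ℝ) ≃ₗ[ℝ] (ℝ × ℝ), ∀ x y, f (mul₁ x y) = mul₂ (f x) (f y) := by
  rintro ⟨f, hf⟩
  have hvu : mul₂ (f (0, 1)) (f (1, 0)) = 0 := by
    rw [← hf, hmul₁]; norm_num
  have huv : mul₂ (f (1, 0)) (f (0, 1)) = f (0, 1) := by
    rw [← hf, hmul₁]; norm_num
  have hvv : mul₂ (f (0, 1)) (f (0, 1)) = f (1, 0) := by
    rw [← hf, hmul₁]; norm_num
  have huu : mul₂ (f (1, 0)) (f (1, 0)) = (2 : ℝ) • f (1, 0) := by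
    rw [← hf, hmul₁, ← map_smul]; norm_num
  have hv : f (0, 1) = f 0 := by
    rw [eq_zero_of_mul_table mul₂ hmul₂ hvu huv hvv huu, map_zero]
  exact one_ne_zero (congrArg Prod.snd (f.injective hv))
end

section
/- Let g = aff(ℝ) with basis e₁,e₂, bracket [e₁,e₂] = e₂, and let · be any bilinear product on g that is left-symmetric and satisfies x·y − y·x = [x,y], written as e₁·e₁ = αe₁+βe₂, e₁·e₂ = γe₁+(δ+1)e₂, e₂·e₁ = γe₁+δe₂, e₂·e₂ = εe₁+λe₂. Then trace(R_x) = 0 for all x ∈ g, where R_x(y) := y·x, if and only if α = γ = δ = ε = λ = 0, i.e. if and only if the product has the form e₁·e₁ = βe₂, e₁·e₂ = e₂, e₂·e₁ = 0, e₂·e₂ = 0 for some β ∈ ℝ. (This is the completeness criterion: a flat left invariant affine structure is geodesically complete iff trace(R_x) = 0 for all x.) -/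
lemma trace_prod' (f : (ℝ × ℝ) →ₗ[ℝ] (ℝ × ℝ)) :
    LinearMap.trace ℝ (ℝ × ℝ) f = (f (1,0)).1 + (f (0,1)).2 := by
  rw [LinearMap.trace_eq_matrix_trace ℝ (Module.Basis.finTwoProd ℝ)]
  simp [Matrix.trace, LinearMap.toMatrix_apply, Module.Basis.finTwoProd, Fin.sum_univ_two]

/-- For a left-symmetric product compatible with the bracket on `aff(ℝ)`, written with
parameters `α,β,γ,δ,ε,λ`, one has `trace(R_x) = 0` for all `x` (where `R_x(y) = y·x`)
iff `α = γ = δ = ε = λ = 0`, i.e. iff the product is `e₁·e₁ = βe₂`, `e₁·e₂ = e₂`,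
`e₂·e₁ = 0`, `e₂·e₂ = 0` (the geodesic completeness criterion). -/
theorem stmt10 (α β γ δ ε lam : ℝ)
    (mul : ℝ × ℝ → ℝ × ℝ → ℝ × ℝ)
    (hmul : ∀ x y, mul x y =
      (α * (x.1 * y.1) + γ * (x.1 * y.2) + γ * (x.2 * y.1) + ε * (x.2 * y.2),
       β * (x.1 * y.1) + (δ + 1) * (x.1 * y.2) + δ * (x.2 * y.1) + lam * (x.2 * y.2)))
    (hls : ∀ x y z, mul (mul x y) z - mul x (mul y z) = mul (mul y x) z - mul y (mul x z))
    (R : ℝ × ℝ → (ℝ × ℝ) →ₗ[ℝ] (ℝ × ℝ))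
    (hR : ∀ x y, R x y = mul y x) :
    (∀ x, LinearMap.trace ℝ (ℝ × ℝ) (R x) = 0) ↔
      (α = 0 ∧ γ = 0 ∧ δ = 0 ∧ ε = 0 ∧ lam = 0) := by
  constructor
  · intro h
    have t1 := h (1,0)
    have t2 := h (0,1)
    rw [trace_prod'] at t1 t2
    simp only [hR, hmul] at t1 t2
    norm_num at t1 t2
    -- t1 : α + δ = 0, t2 : γ + lam = 0
    have hα : α = -δ := by linarith
    have hlam : lam = -γ := by linarith
    subst hα hlam
    have E1 := hls (1,0) (0,1) (1,0)
    have E2 := hls (1,0) (0,1) (0,1)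
    simp only [hmul, Prod.mk_sub_mk, Prod.mk.injEq] at E1 E2
    norm_num at E1 E2
    obtain ⟨e1a, e1b⟩ := E1
    obtain ⟨e2a, e2b⟩ := E2
    have B : δ^2 + β*γ = 0 := by linear_combination (-(1:ℝ)/2) * e1b
    have C : γ^2 + ε*(δ+1) = 0 := by linear_combination ((1:ℝ)/2) * e2a
    have D : δ*γ - β*ε - γ = 0 := by linear_combination e2b
    have hε : ε = 0 := by linear_combination ε*B + γ*D + (1-δ)*C
    have hγ : γ = 0 := by
      have : γ^2 = 0 := by linear_combination C - (δ+1)*hε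
      exact pow_eq_zero_iff two_ne_zero |>.mp this
    have hδ : δ = 0 := by
      have : δ^2 = 0 := by linear_combination B - β*hγ
      exact pow_eq_zero_iff two_ne_zero |>.mp this
    exact ⟨by rw [hδ, neg_zero], hγ, hδ, hε, by rw [hγ, neg_zero]⟩
  · rintro ⟨ha, hg, hd, he, hl⟩ x
    rw [trace_prod']
    simp only [hR, hmul]
    simp [ha, hg, hd, he, hl]
end

section
/- On ℝ² with basis e₁,e₂, each of the following four products satisfies the Hessian identity ⟨x·y,z⟩ − ⟨x, y·z⟩ = ⟨y·x,z⟩ − ⟨y, x·z⟩ for all x,y,z ∈ ℝ², with respect to the indicated symmetric bilinear form ⟨,⟩ given by its matrix in the basis (e₁,e₂): (1) the product e₁·e₁ = −e₁−e₂, e₁·e₂ = e₂, e₂·e₁ = 0, e₂·e₂ = 0 with matrix [[0,1],[1,0]]; (2) the product e₁·e₁ = −2e₁+2e₂, e₁·e₂ = −e₂, e₂·e₁ = −2e₂, e₂·e₂ = 0 with matrix [[1,−1/4],[−1/4,1/8]]; (3) the product e₁·e₁ = 2e₁, e₁·e₂ = e₂, e₂·e₁ = 0, e₂·e₂ = e₁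 with matrix [[2,0],[0,1]]; (4) the product e₁·e₁ = 2e₁, e₁·e₂ = e₂, e₂·e₁ = 0, e₂·e₂ = −e₁ with matrix [[2,0],[0,−1]]. Moreover the forms in (2) and (3) are positive definite, and those in (1) and (4) are nondegenerate indefinite. -/
/-- Four left-symmetric products on `aff(ℝ) = ℝ²` satisfy the Hessian identity
`⟨x·y,z⟩ − ⟨x,y·z⟩ = ⟨y·x,z⟩ − ⟨y,x·z⟩` with respect to the indicated symmetric bilinear
forms; the forms in (2) and (3) are positive definite and those in (1) and (4) are
nondegenerate indefinite. -/
theorem stmt12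
    (mul₁ mul₂ mul₃ mul₄ : ℝ × ℝ → ℝ × ℝ → ℝ × ℝ)
    (B₁ B₂ B₃ B₄ : ℝ × ℝ → ℝ × ℝ → ℝ)
    -- (1) `e₁·e₁ = −e₁−e₂`, `e₁·e₂ = e₂`, `e₂·e₁ = 0`, `e₂·e₂ = 0`, matrix [[0,1],[1,0]]
    (hmul₁ : ∀ x y, mul₁ x y = (-(x.1 * y.1), -(x.1 * y.1) + x.1 * y.2))
    (hB₁ : ∀ x y, B₁ x y = x.1 * y.2 + x.2 * y.1)
    -- (2) `e₁·e₁ = −2e₁+2e₂`, `e₁·e₂ = −e₂`, `e₂·e₁ = −2e₂`, `e₂·e₂ = 0`,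
    --     matrix [[1,−1/4],[−1/4,1/8]]
    (hmul₂ : ∀ x y, mul₂ x y = (-2 * (x.1 * y.1), 2 * (x.1 * y.1) - x.1 * y.2 - 2 * (x.2 * y.1)))
    (hB₂ : ∀ x y, B₂ x y = x.1 * y.1 - (1/4) * (x.1 * y.2) - (1/4) * (x.2 * y.1)
      + (1/8) * (x.2 * y.2))
    -- (3) `e₁·e₁ = 2e₁`, `e₁·e₂ = e₂`, `e₂·e₁ = 0`, `e₂·e₂ = e₁`, matrix [[2,0],[0,1]]
    (hmul₃ : ∀ x y, mul₃ x y = (2 * (x.1 * y.1) + x.2 * y.2, x.1 * y.2))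
    (hB₃ : ∀ x y, B₃ x y = 2 * (x.1 * y.1) + x.2 * y.2)
    -- (4) `e₁·e₁ = 2e₁`, `e₁·e₂ = e₂`, `e₂·e₁ = 0`, `e₂·e₂ = −e₁`, matrix [[2,0],[0,−1]]
    (hmul₄ : ∀ x y, mul₄ x y = (2 * (x.1 * y.1) - x.2 * y.2, x.1 * y.2))
    (hB₄ : ∀ x y, B₄ x y = 2 * (x.1 * y.1) - x.2 * y.2) :
    (∀ x y z, B₁ (mul₁ x y) z - B₁ x (mul₁ y z) = B₁ (mul₁ y x) z - B₁ y (mul₁ x z)) ∧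
    (∀ x y z, B₂ (mul₂ x y) z - B₂ x (mul₂ y z) = B₂ (mul₂ y x) z - B₂ y (mul₂ x z)) ∧
    (∀ x y z, B₃ (mul₃ x y) z - B₃ x (mul₃ y z) = B₃ (mul₃ y x) z - B₃ y (mul₃ x z)) ∧
    (∀ x y z, B₄ (mul₄ x y) z - B₄ x (mul₄ y z) = B₄ (mul₄ y x) z - B₄ y (mul₄ x z)) ∧
    -- (2) and (3) are positive definite
    (∀ x : ℝ × ℝ, x ≠ 0 → 0 < B₂ x x) ∧
    (∀ x : ℝ × ℝ, x ≠ 0 → 0 < B₃ x x) ∧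
    -- (1) and (4) are nondegenerate indefinite
    ((∀ x : ℝ × ℝ, (∀ y, B₁ x y = 0) → x = 0) ∧ (∃ x, 0 < B₁ x x) ∧ (∃ x, B₁ x x < 0)) ∧
    ((∀ x : ℝ × ℝ, (∀ y, B₄ x y = 0) → x = 0) ∧ (∃ x, 0 < B₄ x x) ∧ (∃ x, B₄ x x < 0)) := by
  refine ⟨?_, ?_, ?_, ?_, ?_, ?_, ⟨?_, ⟨(1,1), by norm_num [hB₁]⟩, ⟨(1,-1), by norm_num [hB₁]⟩⟩, ⟨?_, ⟨(1,0), by norm_num [hB₄]⟩, ⟨(0,1), by norm_num [hB₄]⟩⟩⟩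
  · intro x y z; simp only [hmul₁, hB₁]; ring
  · intro x y z; simp only [hmul₂, hB₂]; ring
  · intro x y z; simp only [hmul₃, hB₃]; ring
  · intro x y z; simp only [hmul₄, hB₄]; ring
  · intro x hx
    have h : x.1 ≠ 0 ∨ x.2 ≠ 0 := by
      by_contra h; push_neg at h
      exact hx (Prod.ext h.1 h.2)
    rw [hB₂]
    rcases h with h | h <;> nlinarith [sq_nonneg (x.1 - x.2/4), sq_nonneg x.2, sq_nonneg x.1, mul_self_pos.mpr h]
  · intro x hx
    have h : x.1 ≠ 0 ∨ x.2 ≠ 0 := by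
      by_contra h; push_neg at h
      exact hx (Prod.ext h.1 h.2)
    rw [hB₃]
    rcases h with h | h <;> nlinarith [sq_nonneg x.2, sq_nonneg x.1, mul_self_pos.mpr h]
  · intro x h
    have h1 := h (0,1); have h2 := h (1,0)
    simp [hB₁] at h1 h2
    exact Prod.ext (by simpa using h1) (by simpa using h2)
  · intro x h
    have h1 := h (1,0); have h2 := h (0,1)
    simp [hB₄] at h1 h2
    exact Prod.ext (by simpa using h1) (by simpa using h2)
end

section
/- On ℝ² with basis e₁,e₂, let ⟨,⟩ be the symmetric bilinear form with matrix [[1,−1],[−1,0]] in the basis (e₁,e₂) (a Lorentzian, i.e. nondegenerate indefinite, form), and let · be the product e₁·e₁ = −e₁−e₂, e₁·e₂ = e₂, e₂·e₁ = 0, e₂·e₂ = 0. Then · satisfies x·y − y·x = [x,y] where [e₁,e₂] = e₂, and the metric-compatibility identity ⟨x·y, z⟩ + ⟨y, x·z⟩ = 0 for all x,y,z ∈ ℝ². Hence · is the (flat) Levi-Civita connection of the corresponding left invariant Lorentzian metric on Aff(ℝ). -/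
/-- On `ℝ²` with the Lorentzian (nondegenerate indefinite) form of matrix
`[[1,−1],[−1,0]]` and the product `e₁·e₁ = −e₁−e₂`, `e₁·e₂ = e₂`, `e₂·e₁ = 0`,
`e₂·e₂ = 0`: the commutator of the product is the bracket `[e₁,e₂] = e₂`, and
`⟨x·y,z⟩ + ⟨y,x·z⟩ = 0` for all `x,y,z`; hence the product is the flat Levi-Civita
connection of the corresponding left invariant Lorentzian metric on `Aff(ℝ)`. -/
theorem stmt13
    (mul : ℝ × ℝ → ℝ × ℝ → ℝ × ℝ)
    (B : ℝ × ℝ → ℝ × ℝ → ℝ)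
    (hmul : ∀ x y, mul x y = (-(x.1 * y.1), -(x.1 * y.1) + x.1 * y.2))
    (hB : ∀ x y, B x y = x.1 * y.1 - x.1 * y.2 - x.2 * y.1) :
    -- the form is nondegenerate and indefinite
    ((∀ x : ℝ × ℝ, (∀ y, B x y = 0) → x = 0) ∧ (∃ x, 0 < B x x) ∧ (∃ x, B x x < 0)) ∧
    -- compatibility of the product with the bracket
    (∀ x y, mul x y - mul y x = (0, x.1 * y.2 - x.2 * y.1)) ∧
    -- metric compatibility
    (∀ x y z, B (mul x y) z + B y (mul x z) = 0) := by
  refine ⟨⟨fun x hx => ?_, ⟨(1,0), by simp [hB]⟩, ⟨(1,1), by simp [hB]⟩⟩,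
    fun x y => ?_, fun x y z => ?_⟩
  · have h1 := hx (1,0)
    have h2 := hx (0,1)
    simp [hB] at h1 h2
    have hx1 : x.1 = 0 := by linarith
    have hx2 : x.2 = 0 := by linarith
    exact Prod.ext hx1 hx2
  · simp [hmul, Prod.ext_iff]
    constructor <;> ring
  · simp [hmul, hB]; ring
end

section
/- On ℝ² with basis e₁,e₂, let ω be the skew-symmetric bilinear form with ω(e₁,e₂) = 1. Then both of the following left-symmetric products, each compatible with the bracket [e₁,e₂] = e₂, satisfy the symplectic-connection identity ω(x·y, z) + ω(y, x·z) = 0 for all x,y,z ∈ ℝ²: (1) e₁·e₁ = −e₁−e₂, e₁·e₂ = e₂, e₂·e₁ = 0, e₂·e₂ = 0; and (2) e₁·e₁ = −(1/2)e₁+(1/2)e₂, e₁·e₂ = (1/2)e₂, e₂·e₁ = −(1/2)e₂, e₂·e₂ = 0. -/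
/-- With `ω(e₁,e₂) = 1` on `ℝ²`, the two left-symmetric products
(1) `e₁·e₁ = −e₁−e₂`, `e₁·e₂ = e₂`, `e₂·e₁ = 0`, `e₂·e₂ = 0` and
(2) `e₁·e₁ = −½e₁+½e₂`, `e₁·e₂ = ½e₂`, `e₂·e₁ = −½e₂`, `e₂·e₂ = 0`,
each compatible with the bracket `[e₁,e₂] = e₂`, satisfy the symplectic-connection
identity `ω(x·y,z) + ω(y,x·z) = 0`. -/
theorem stmt14
    (ω : ℝ × ℝ → ℝ × ℝ → ℝ)
    (hω : ∀ x y, ω x y = x.1 * y.2 - x.2 * y.1)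
    (mul₁ mul₂ : ℝ × ℝ → ℝ × ℝ → ℝ × ℝ)
    (hmul₁ : ∀ x y, mul₁ x y = (-(x.1 * y.1), -(x.1 * y.1) + x.1 * y.2))
    (hmul₂ : ∀ x y, mul₂ x y =
      (-(1/2) * (x.1 * y.1),
       (1/2) * (x.1 * y.1) + (1/2) * (x.1 * y.2) - (1/2) * (x.2 * y.1))) :
    -- both products are left-symmetric and compatible with the bracket
    (∀ x y z, mul₁ (mul₁ x y) z - mul₁ x (mul₁ y z) = mul₁ (mul₁ y x) z - mul₁ y (mul₁ x z)) ∧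
    (∀ x y z, mul₂ (mul₂ x y) z - mul₂ x (mul₂ y z) = mul₂ (mul₂ y x) z - mul₂ y (mul₂ x z)) ∧
    (∀ x y, mul₁ x y - mul₁ y x = (0, x.1 * y.2 - x.2 * y.1)) ∧
    (∀ x y, mul₂ x y - mul₂ y x = (0, x.1 * y.2 - x.2 * y.1)) ∧
    -- both satisfy the symplectic-connection identity
    (∀ x y z, ω (mul₁ x y) z + ω y (mul₁ x z) = 0) ∧
    (∀ x y z, ω (mul₂ x y) z + ω y (mul₂ x z) = 0) := by
  refine ⟨?_,?_,?_,?_,?_,?_⟩ <;>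
    intros <;>
    simp only [hω, hmul₁, hmul₂, Prod.ext_iff, Prod.sub_def, Prod.fst_sub, Prod.snd_sub] <;>
    first
      | (constructor <;> ring)
      | ring
end

section
/- Let g be a finite-dimensional real vector space with a left-symmetric bilinear product · (i.e. (x·y)·z − x·(y·z) = (y·x)·z − y·(x·z) for all x,y,z), and set [x,y] := x·y − y·x. Define on t*g := g* × g the bracket [(α,x),(β,y)] := (−β∘L_x + α∘L_y, [x,y]), where L_x(z) = x·z, and the bilinear form ω((α,x),(β,y)) := α(y) − β(x). Then: (1) this bracket makes t*g a Lie algebra; (2) ω is skew-symmetric and nondegenerate; and (3) ω is a scalar 2-cocycle, i.e. ω([u,v],w) + ω([v,w],u) + ω([w,u],v) = 0 for all u,v,w ∈ t*g. Hence (t*g, ω) is a symplectic Lie algebra. -/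
/-- For a finite-dimensional real left-symmetric algebra `(g,·)`, the space
`t*g = g* × g` with bracket `[(α,x),(β,y)] = (−β∘L_x + α∘L_y, [x,y])` and the form
`ω((α,x),(β,y)) = α(y) − β(x)` is a symplectic Lie algebra: the bracket is bilinear,
alternating and satisfies the Jacobi identity; `ω` is skew-symmetric and nondegenerate;
and `ω` is a scalar 2-cocycle. -/
theorem stmt16 (g : Type*) [AddCommGroup g] [Module ℝ g] [FiniteDimensional ℝ g]
    (mul : g →ₗ[ℝ] g →ₗ[ℝ] g)
    (hls : ∀ x y z, mul (mul x y) z - mul x (mul y z) = mul (mul y x) z - mul y (mul x z))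
    (Br : (Module.Dual ℝ g × g) → (Module.Dual ℝ g × g) → (Module.Dual ℝ g × g))
    (hBr : ∀ u v, Br u v =
      (-(v.1.comp (mul u.2)) + u.1.comp (mul v.2), mul u.2 v.2 - mul v.2 u.2))
    (ω : (Module.Dual ℝ g × g) → (Module.Dual ℝ g × g) → ℝ)
    (hω : ∀ u v, ω u v = u.1 v.2 - v.1 u.2) :
    ((∀ u v w, Br (u + v) w = Br u w + Br v w) ∧
     (∀ (c : ℝ) (u v), Br (c • u) v = c • Br u v) ∧
     (∀ u v w, Br u (v + w) = Br u v + Br u w) ∧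
     (∀ (c : ℝ) (u v), Br u (c • v) = c • Br u v) ∧
     (∀ u, Br u u = 0) ∧
     (∀ u v w, Br (Br u v) w + Br (Br v w) u + Br (Br w u) v = 0)) ∧
    ((∀ u v, ω u v = -ω v u) ∧ (∀ u, (∀ v, ω u v = 0) → u = 0)) ∧
    (∀ u v w, ω (Br u v) w + ω (Br v w) u + ω (Br w u) v = 0) := by
  refine ⟨⟨?_, ?_, ?_, ?_, ?_, ?_⟩, ⟨?_, ?_⟩, ?_⟩
  · intro u v w
    refine Prod.ext ?_ ?_
    · ext a; simp [hBr]; ring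
    · simp [hBr]; abel
  · intro c u v
    refine Prod.ext ?_ ?_
    · ext a; simp [hBr]
    · simp [hBr, smul_sub]
  · intro u v w
    refine Prod.ext ?_ ?_
    · ext a; simp [hBr]; ring
    · simp [hBr]; abel
  · intro c u v
    refine Prod.ext ?_ ?_
    · ext a; simp [hBr]
    · simp [hBr, smul_sub]
  · intro u
    refine Prod.ext ?_ ?_ <;> simp [hBr]
  · intro u v w
    refine Prod.ext ?_ ?_
    · ext a
      simp [hBr]
      have h1 := congrArg w.1 (hls u.2 v.2 a)
      have h2 := congrArg u.1 (hls v.2 w.2 a)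
      have h3 := congrArg v.1 (hls w.2 u.2 a)
      simp [map_sub] at h1 h2 h3
      linarith
    · simp only [hBr, map_sub, LinearMap.sub_apply, Prod.snd_add, Prod.snd_zero]
      have e1 := hls u.2 v.2 w.2
      have e2 := hls v.2 w.2 u.2
      have e3 := hls w.2 u.2 v.2
      linear_combination (norm := abel) e1 + e2 + e3
  · intro u v; simp [hω]
  · intro u h
    have hα : u.1 = 0 := by
      ext y
      have := h (0, y)
      simpa [hω] using this
    have hx : u.2 = 0 := by
      rw [← Module.forall_dual_apply_eq_zero_iff ℝ]
      intro β
      have := h (β, 0)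
      simp [hω] at this
      linarith
    exact Prod.ext hα hx
  · intro u v w
    simp [hBr, hω]
    ring
end

section
/- Let G₀ = {(x,y) ∈ ℝ² : x > 0} with group law (x,y)·(z,w) = (xz, xw + y). Then the map ρ₃ : G₀ → GL(3,ℝ) defined by ρ₃(x,y) = [[x², xy, (x²+y²−1)/2],[0, x, y],[0,0,1]] is an injective group homomorphism. Consequently, ρ₃ is a faithful affine representation of G₀ (the connected component of the identity of Aff(ℝ)) on the plane. -/
/-- The map `ρ₃(x,y) = [[x², xy, (x²+y²−1)/2],[0,x,y],[0,0,1]]` is a faithful affine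
representation of `G₀ = {(x,y) : x > 0}` (the identity component of `Aff(ℝ)`, with group
law `(x,y)(z,w) = (xz, xw+y)`) into `GL(3,ℝ)`: it preserves the group law, maps the
identity to the identity, takes values in invertible matrices, and is injective. -/
theorem stmt18 (ρ : ℝ → ℝ → Matrix (Fin 3) (Fin 3) ℝ)
    (hρ : ∀ x y, ρ x y = !![x ^ 2, x * y, (x ^ 2 + y ^ 2 - 1) / 2; 0, x, y; 0, 0, 1]) :
    (∀ x y z w : ℝ, 0 < x → 0 < z → ρ (x * z) (x * w + y) = ρ x y * ρ z w) ∧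
    (ρ 1 0 = 1) ∧
    (∀ x y : ℝ, 0 < x → IsUnit (ρ x y)) ∧
    (∀ x y x' y' : ℝ, 0 < x → 0 < x' → ρ x y = ρ x' y' → x = x' ∧ y = y') := by
  refine ⟨?_, ?_, ?_, ?_⟩
  · intro x y z w _ _
    rw [hρ, hρ, hρ, Matrix.mul_fin_three]
    congr 1 <;> ring
  · rw [hρ]
    ext i j
    fin_cases i <;> fin_cases j <;>
      simp [Matrix.one_apply, Matrix.vecHead, Matrix.vecTail]
  · intro x y hx
    rw [Matrix.isUnit_iff_isUnit_det, hρ, Matrix.det_fin_three]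
    simp only [isUnit_iff_ne_zero, Matrix.cons_val', Matrix.cons_val_zero, Matrix.cons_val_one,
      Matrix.head_cons, Matrix.empty_val', Matrix.cons_val_fin_one, Matrix.head_fin_const,
      Matrix.cons_val_two, Matrix.tail_cons, Matrix.head_fin_const]
    intro h
    simp [Matrix.vecHead, Matrix.vecTail] at h
    nlinarith
  · intro x y x' y' hx hx' h
    rw [hρ, hρ] at h
    have h01 := congrFun (congrFun h 0) 1
    have h12 := congrFun (congrFun h 1) 2
    have h11 := congrFun (congrFun h 1) 1
    simp at h01 h12 h11
    exact ⟨h11, h12⟩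
end
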